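/- arXiv:1309.0707 — 3 statements merged into one kernel-verified Lean document; each statement's English description precedes it below -/
import Mathlib

section
/- For a chi-square random variable χ²_{n_2} with n_2 = I_1 + I_2 degrees of freedom decomposed as χ²_{n_2} = χ²_{I_1} + χ²_{I_2} with independent parts, and thresholds r_1², r_2² > 0, the joint tail satisfies, for every u ∈ [0, 1/2): P[χ²_{I_1} > r_1² and χ²_{I_1} + χ²_{I_2} > r_2²] ≤ e^{-u r_2²} (1-2u)^{-n_2/2} · P[χ²_{I_1} > (1-2u) r_1²]. -/
open MeasureTheory ProbabilityTheory

/-- The chi-square distribution with `k` degrees of freedom, as the Gamma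
distribution with shape `k/2` and rate `1/2`. -/
noncomputable def chiSquareMeasure (k : ℕ) : Measure ℝ :=
  gammaMeasure ((k : ℝ) / 2) (1 / 2)

/-!
On the event, `1 ≤ exp (u * (X + Y - r₂²))`; keeping the indicator of `X > r₁²` and using
independence, the probability is at most `e^{-u r₂²} E[e^{uX}; X > r₁²] E[e^{uY}]`.
Multiplying the Gamma(a, r) density by `e^{ux}` gives `(1 - u/r)^{-a}` times the Gamma(a, r - u)
density, and Gamma(a, r - u) is the law of `X / (1 - u/r)` for `X ~ Gamma(a, r)`: for `r = 1/2`
this is the substitution `z' = √(1 - 2u) z`, which turns the tilted tail at `r₁²` into the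
untilted one at `(1 - 2u) r₁²`.
-/

open Set Real
open scoped ENNReal

section Gamma

variable {a r u c : ℝ}

lemma measurable_gammaPDF (a r : ℝ) : Measurable (gammaPDF a r) :=
  (measurable_gammaPDFReal a r).ennreal_ofReal

lemma gammaPDF_mul_exp (hr : 0 < r) (hu : u < r) (x : ℝ) :
    gammaPDF a r x * ENNReal.ofReal (exp (u * x))
      = ENNReal.ofReal ((1 - u / r) ^ (-a)) * gammaPDF a (r - u) x := by
  rcases lt_or_ge x 0 with hx | hx
  · simp [gammaPDF_of_neg hx]
  have hc : 0 < 1 - u / r := sub_pos.2 ((div_lt_one hr).2 hu)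
  rw [gammaPDF_of_nonneg hx, gammaPDF_of_nonneg hx, mul_comm,
    ← ENNReal.ofReal_mul (exp_nonneg _), ← ENNReal.ofReal_mul (by positivity)]
  have hrate : (1 - u / r) ^ (-a) * (r - u) ^ a = r ^ a := by
    rw [show r - u = (1 - u / r) * r by field_simp, mul_rpow hc.le hr.le, ← mul_assoc,
      ← rpow_add hc, neg_add_cancel, rpow_zero, one_mul]
  have hexp : exp (u * x) * exp (-(r * x)) = exp (-((r - u) * x)) := by
    rw [← exp_add]; ring_nf
  rw [← hrate, ← hexp]
  ring_nf

lemma gammaMeasure_withDensity_exp (hr : 0 < r) (hu : u < r) :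
    (gammaMeasure a r).withDensity (fun x ↦ ENNReal.ofReal (exp (u * x)))
      = ENNReal.ofReal ((1 - u / r) ^ (-a)) • gammaMeasure a (r - u) := by
  rw [gammaMeasure, gammaMeasure, ← withDensity_mul _ (measurable_gammaPDF a r) (by fun_prop),
    ← withDensity_smul _ (measurable_gammaPDF a (r - u))]
  congr 1
  funext x
  exact gammaPDF_mul_exp hr hu x

lemma ofReal_mul_gammaPDF_const_mul (hc : 0 < c) (hr : 0 ≤ r) (x : ℝ) :
    ENNReal.ofReal c * gammaPDF a r (c * x) = gammaPDF a (c * r) x := by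
  rcases lt_or_ge x 0 with hx | hx
  · rw [gammaPDF_of_neg (mul_neg_of_pos_of_neg hc hx), gammaPDF_of_neg hx, mul_zero]
  rw [gammaPDF_of_nonneg (by positivity), gammaPDF_of_nonneg hx, ← ENNReal.ofReal_mul hc.le]
  congr 1
  have hpow : c * (c * x) ^ (a - 1) = c ^ a * x ^ (a - 1) := by
    rw [mul_rpow hc.le hx, rpow_sub_one hc.ne']
    field_simp
  rw [mul_rpow hc.le hr, show r * (c * x) = c * r * x by ring]
  linear_combination (r ^ a / Gamma a * exp (-(c * r * x))) * hpow

lemma map_const_mul_gammaMeasure (hc : 0 < c) (hr : 0 ≤ r) :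
    (gammaMeasure a r).map (c * ·) = gammaMeasure a (c⁻¹ * r) := by
  ext s hs
  rw [Measure.map_apply (measurable_const_mul c) hs, gammaMeasure, gammaMeasure,
    withDensity_apply _ (measurable_const_mul c hs), withDensity_apply _ hs,
    ← lintegral_indicator (measurable_const_mul c hs), ← lintegral_indicator hs]
  conv_lhs => rw [← Real.smul_map_volume_mul_left (inv_pos.2 hc).ne']
  rw [lintegral_smul_measure, lintegral_map ((measurable_gammaPDF a r).indicator
      (measurable_const_mul c hs)) (measurable_const_mul _), abs_of_pos (inv_pos.2 hc),
    smul_eq_mul, ← lintegral_const_mul' _ _ ENNReal.ofReal_ne_top]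
  congr 1
  funext x
  by_cases hx : x ∈ s
  · rw [indicator_of_mem (by simpa [mul_inv_cancel_left₀ hc.ne'] using hx), indicator_of_mem hx,
      ofReal_mul_gammaPDF_const_mul (inv_pos.2 hc) hr]
  · rw [indicator_of_notMem (by simpa [mul_inv_cancel_left₀ hc.ne'] using hx),
      indicator_of_notMem hx, mul_zero]

lemma gammaMeasure_sub_Ioi (hr : 0 < r) (hu : u < r) (t : ℝ) :
    gammaMeasure a (r - u) (Ioi t) = gammaMeasure a r (Ioi ((1 - u / r) * t)) := by
  have hc : 0 < 1 - u / r := sub_pos.2 ((div_lt_one hr).2 hu)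
  rw [show r - u = (1 - u / r)⁻¹⁻¹ * r by field_simp,
    ← map_const_mul_gammaMeasure (inv_pos.2 hc) hr.le,
    Measure.map_apply (measurable_const_mul _) measurableSet_Ioi,
    preimage_const_mul_Ioi₀ _ (inv_pos.2 hc), div_inv_eq_mul, mul_comm]

lemma setLIntegral_Ioi_exp_mul_gammaMeasure (hr : 0 < r) (hu : u < r) (t : ℝ) :
    ∫⁻ x in Ioi t, ENNReal.ofReal (exp (u * x)) ∂gammaMeasure a r
      = ENNReal.ofReal ((1 - u / r) ^ (-a)) * gammaMeasure a r (Ioi ((1 - u / r) * t)) := by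
  rw [← withDensity_apply _ measurableSet_Ioi, gammaMeasure_withDensity_exp hr hu,
    Measure.smul_apply, smul_eq_mul, gammaMeasure_sub_Ioi hr hu]

lemma lintegral_exp_mul_gammaMeasure (ha : 0 < a) (hr : 0 < r) (hu : u < r) :
    ∫⁻ x, ENNReal.ofReal (exp (u * x)) ∂gammaMeasure a r
      = ENNReal.ofReal ((1 - u / r) ^ (-a)) := by
  have := isProbabilityMeasure_gammaMeasure ha (sub_pos.2 hu)
  rw [← setLIntegral_univ, ← withDensity_apply _ MeasurableSet.univ,
    gammaMeasure_withDensity_exp hr hu, Measure.smul_apply, measure_univ, smul_eq_mul, mul_one]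

end Gamma

lemma isProbabilityMeasure_chiSquareMeasure {k : ℕ} (hk : 0 < k) :
    IsProbabilityMeasure (chiSquareMeasure k) :=
  isProbabilityMeasure_gammaMeasure (by positivity) one_half_pos

section ChiSquare

variable {u : ℝ}

lemma lintegral_exp_mul_chiSquareMeasure {k : ℕ} (hk : 0 < k) (hu : u < 1 / 2) :
    ∫⁻ x, ENNReal.ofReal (exp (u * x)) ∂chiSquareMeasure k
      = ENNReal.ofReal ((1 - 2 * u) ^ (-((k : ℝ) / 2))) := by
  rw [chiSquareMeasure, lintegral_exp_mul_gammaMeasure (by positivity) one_half_pos hu,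
    show 1 - u / (1 / 2) = 1 - 2 * u by ring]

lemma setLIntegral_Ioi_exp_mul_chiSquareMeasure (k : ℕ) (hu : u < 1 / 2) (t : ℝ) :
    ∫⁻ x in Ioi t, ENNReal.ofReal (exp (u * x)) ∂chiSquareMeasure k
      = ENNReal.ofReal ((1 - 2 * u) ^ (-((k : ℝ) / 2)))
        * chiSquareMeasure k (Ioi ((1 - 2 * u) * t)) := by
  rw [chiSquareMeasure, setLIntegral_Ioi_exp_mul_gammaMeasure one_half_pos hu,
    show 1 - u / (1 / 2) = 1 - 2 * u by ring]

end ChiSquare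

lemma prod_setOf_lt_fst_and_lt_add_le (ν₁ ν₂ : Measure ℝ) [SFinite ν₂] {u : ℝ} (hu : 0 ≤ u)
    (s t : ℝ) :
    ν₁.prod ν₂ {p | s < p.1 ∧ t < p.1 + p.2}
      ≤ ENNReal.ofReal (exp (-(u * t)))
        * ((∫⁻ x in Ioi s, ENNReal.ofReal (exp (u * x)) ∂ν₁)
          * ∫⁻ y, ENNReal.ofReal (exp (u * y)) ∂ν₂) := by
  set E : ℝ → ℝ≥0∞ := fun x ↦ ENNReal.ofReal (exp (u * x))
  have hE : Measurable E := by fun_prop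
  have hT : MeasurableSet {p : ℝ × ℝ | s < p.1 ∧ t < p.1 + p.2} := by measurability
  have hpoint (x y : ℝ) : {p : ℝ × ℝ | s < p.1 ∧ t < p.1 + p.2}.indicator 1 (x, y)
      ≤ ENNReal.ofReal (exp (-(u * t))) * ((Ioi s).indicator E x * E y) := by
    by_cases hp : (x, y) ∈ {p : ℝ × ℝ | s < p.1 ∧ t < p.1 + p.2}
    · rw [indicator_of_mem hp]
      obtain ⟨hx, hxy⟩ : s < x ∧ t < x + y := hp
      rw [indicator_of_mem (mem_Ioi.2 hx), Pi.one_apply,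
        ← ENNReal.ofReal_mul (exp_nonneg _), ← ENNReal.ofReal_mul (exp_nonneg _), ← exp_add,
        ← exp_add]
      exact ENNReal.one_le_ofReal.2 (one_le_exp (by nlinarith))
    · rw [indicator_of_notMem hp]
      exact zero_le
  calc ν₁.prod ν₂ {p | s < p.1 ∧ t < p.1 + p.2}
      = ∫⁻ p, {p : ℝ × ℝ | s < p.1 ∧ t < p.1 + p.2}.indicator 1 p ∂ν₁.prod ν₂ :=
        (lintegral_indicator_one hT).symm
    _ ≤ ∫⁻ p, ENNReal.ofReal (exp (-(u * t))) * ((Ioi s).indicator E p.1 * E p.2) ∂ν₁.prod ν₂ :=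
        lintegral_mono fun p ↦ hpoint p.1 p.2
    _ = _ := by
        rw [lintegral_const_mul' _ _ ENNReal.ofReal_ne_top,
          lintegral_prod_mul (hE.indicator measurableSet_Ioi).aemeasurable hE.aemeasurable,
          lintegral_indicator measurableSet_Ioi]

theorem chiSquare_joint_tail_chernoff_general
    {Ω : Type*} [MeasurableSpace Ω] (μ : Measure Ω)
    (I₁ I₂ : ℕ) (hI₁ : 0 < I₁) (hI₂ : 0 < I₂)
    (X Y : Ω → ℝ) (hX : Measurable X) (hY : Measurable Y)
    (hXY : IndepFun X Y μ)
    (hXlaw : μ.map X = chiSquareMeasure I₁) (hYlaw : μ.map Y = chiSquareMeasure I₂)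
    (r₁sq r₂sq : ℝ)
    (u : ℝ) (hu0 : 0 ≤ u) (hu : u < 1 / 2) :
    (μ {ω | r₁sq < X ω ∧ r₂sq < X ω + Y ω}).toReal
      ≤ Real.exp (-(u * r₂sq)) * (1 - 2 * u) ^ (-((I₁ + I₂ : ℝ)) / 2) *
        (μ {ω | (1 - 2 * u) * r₁sq < X ω}).toReal := by
  have := isProbabilityMeasure_chiSquareMeasure hI₁
  have := isProbabilityMeasure_chiSquareMeasure hI₂
  have hlaw : μ.map (fun ω ↦ (X ω, Y ω)) = (chiSquareMeasure I₁).prod (chiSquareMeasure I₂) := by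
    rw [← hXlaw, ← hYlaw]
    exact (indepFun_iff_map_prod_eq_prod_map_map' hX.aemeasurable hY.aemeasurable
      (hXlaw ▸ inferInstance) (hYlaw ▸ inferInstance)).1 hXY
  have hjoint : μ {ω | r₁sq < X ω ∧ r₂sq < X ω + Y ω}
      = (chiSquareMeasure I₁).prod (chiSquareMeasure I₂) {p | r₁sq < p.1 ∧ r₂sq < p.1 + p.2} := by
    rw [← hlaw, Measure.map_apply (hX.prodMk hY) (by measurability)]
    rfl
  have htail :
      μ {ω | (1 - 2 * u) * r₁sq < X ω} = chiSquareMeasure I₁ (Ioi ((1 - 2 * u) * r₁sq)) := by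
    rw [← hXlaw, Measure.map_apply hX measurableSet_Ioi]
    rfl
  have hbound := prod_setOf_lt_fst_and_lt_add_le (chiSquareMeasure I₁) (chiSquareMeasure I₂) hu0
    r₁sq r₂sq
  rw [setLIntegral_Ioi_exp_mul_chiSquareMeasure I₁ hu, lintegral_exp_mul_chiSquareMeasure hI₂ hu]
    at hbound
  rw [hjoint, htail]
  refine (ENNReal.toReal_mono (by finiteness) hbound).trans_eq ?_
  have hc : 0 < 1 - 2 * u := by linarith
  simp only [ENNReal.toReal_mul, ENNReal.toReal_ofReal (exp_nonneg _),
    ENNReal.toReal_ofReal (rpow_nonneg hc.le _)]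
  rw [show (-((I₁ + I₂ : ℝ)) / 2) = -((I₁ : ℝ) / 2) + -((I₂ : ℝ) / 2) by ring, rpow_add hc]
  ring

/-- Chernoff bound on the joint upper tail of a pair of independent chi-square
random variables: for u ∈ [0,1/2),
P[χ²_{I₁} > r₁² ∧ χ²_{I₁} + χ²_{I₂} > r₂²]
  ≤ e^{-u r₂²} (1-2u)^{-(I₁+I₂)/2} P[χ²_{I₁} > (1-2u) r₁²]. -/
theorem chiSquare_joint_tail_chernoff
    {Ω : Type*} [MeasurableSpace Ω] (μ : Measure Ω) [IsProbabilityMeasure μ]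
    (I₁ I₂ : ℕ) (hI₁ : 0 < I₁) (hI₂ : 0 < I₂)
    (X Y : Ω → ℝ) (hX : Measurable X) (hY : Measurable Y)
    (hXY : IndepFun X Y μ)
    (hXlaw : μ.map X = chiSquareMeasure I₁) (hYlaw : μ.map Y = chiSquareMeasure I₂)
    (r₁sq r₂sq : ℝ) (hr₁ : 0 < r₁sq) (hr₂ : 0 < r₂sq)
    (u : ℝ) (hu0 : 0 ≤ u) (hu : u < 1 / 2) :
    (μ {ω | r₁sq < X ω ∧ r₂sq < X ω + Y ω}).toReal
      ≤ Real.exp (-(u * r₂sq)) * (1 - 2 * u) ^ (-((I₁ + I₂ : ℝ)) / 2) *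
        (μ {ω | (1 - 2 * u) * r₁sq < X ω}).toReal :=
  chiSquare_joint_tail_chernoff_general μ I₁ I₂ hI₁ hI₂ X Y hX hY hXY hXlaw hYlaw r₁sq r₂sq u hu0 hu
end

section
/- With χ²_{I_1} and χ²_{I_2} independent chi-square variables and thresholds r_1², r_2² > 0, for every u ∈ [0, 1/2): P[χ²_{I_1} ≤ r_1² and χ²_{I_1} + χ²_{I_2} > r_2²] ≤ e^{-u r_2²} (1-2u)^{-(I_1+I_2)/2} · P[χ²_{I_1} ≤ (1-2u) r_1²]. -/
/-!
Chernoff's method: on the event, `1 ≤ exp (u (X + Y - r₂²)) · 1{X ≤ r₁²}`, so by independence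
the probability is at most `e^{-u r₂²} E[1{X ≤ r₁²} e^{uX}] E[e^{uY}]`. Tilting the `Gamma(a, 1/2)`
density by `e^{ux}` gives `(1 - 2u)^{-a}` times the `Gamma(a, (1 - 2u)/2)` density, which is the law of
`X / (1 - 2u)`; hence `E[e^{uY}] = (1 - 2u)^{-I₂/2}` and
`E[1{X ≤ r₁²} e^{uX}] = (1 - 2u)^{-I₁/2} P[X ≤ (1 - 2u) r₁²]`.
-/

open MeasureTheory ProbabilityTheory

open Real Set

namespace ProbabilityTheory

variable {a r c : ℝ}

lemma gammaPDFReal_mul_exp (hc : 0 < c) (hr : 0 ≤ r) (x : ℝ) :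
    gammaPDFReal a r x * exp ((1 - c) * r * x) = c ^ (-a) * gammaPDFReal a (c * r) x := by
  unfold gammaPDFReal
  split_ifs
  · have hexp : exp (-(r * x)) * exp ((1 - c) * r * x) = exp (-(c * r * x)) := by
      rw [← exp_add]; ring_nf
    have hca : c ^ a ≠ 0 := (rpow_pos_of_pos hc a).ne'
    rw [mul_rpow hc.le hr, rpow_neg hc.le, ← hexp]
    field_simp
  · simp

lemma gammaPDFReal_mul_rate (hc : 0 < c) (hr : 0 ≤ r) (x : ℝ) :
    gammaPDFReal a (c * r) x = c * gammaPDFReal a r (c * x) := by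
  unfold gammaPDFReal
  split_ifs with hx hcx hcx
  · rw [mul_rpow hc.le hr, mul_rpow hc.le hx, rpow_sub_one hc.ne']
    field_simp
  · exact absurd (mul_nonneg hc.le hx) hcx
  · exact absurd (nonneg_of_mul_nonneg_right hcx hc) hx
  · simp

lemma measurable_gammaPDF (a r : ℝ) : Measurable (gammaPDF a r) :=
  (measurable_gammaPDFReal a r).ennreal_ofReal

lemma gammaMeasure_withDensity_exp (hc : 0 < c) (hr : 0 ≤ r) :
    (gammaMeasure a r).withDensity (fun x => ENNReal.ofReal (exp ((1 - c) * r * x)))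
      = ENNReal.ofReal (c ^ (-a)) • gammaMeasure a (c * r) := by
  have hexp : Measurable fun x => ENNReal.ofReal (exp ((1 - c) * r * x)) := by fun_prop
  rw [gammaMeasure, gammaMeasure, ← withDensity_mul _ (measurable_gammaPDF a r) hexp,
    ← withDensity_smul _ (measurable_gammaPDF a (c * r))]
  congr 1
  funext x
  rw [Pi.mul_apply, Pi.smul_apply, smul_eq_mul, gammaPDF, gammaPDF,
    ← ENNReal.ofReal_mul' (exp_nonneg _), ← ENNReal.ofReal_mul (rpow_nonneg hc.le _),
    gammaPDFReal_mul_exp hc hr]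

lemma lintegral_ofReal_mul_comp_mul_left (hc : 0 < c) (f : ℝ → ENNReal) :
    ∫⁻ x, ENNReal.ofReal c * f (c * x) = ∫⁻ x, f x := by
  have hmap : ∫⁻ x, f x ∂(volume.map (c * ·)) = ∫⁻ x, f (c * x) :=
    lintegral_map_equiv f (Homeomorph.mulLeft₀ c hc.ne').toMeasurableEquiv
  rw [lintegral_const_mul' _ _ ENNReal.ofReal_ne_top, ← hmap, Real.map_volume_mul_left hc.ne',
    lintegral_smul_measure, smul_eq_mul, ← mul_assoc, abs_of_pos (inv_pos.2 hc),
    ← ENNReal.ofReal_mul hc.le, mul_inv_cancel₀ hc.ne', ENNReal.ofReal_one, one_mul]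

lemma gammaMeasure_mul_rate (hc : 0 < c) (hr : 0 ≤ r) :
    gammaMeasure a (c * r) = (gammaMeasure a r).map (· / c) := by
  have hdiv : Measurable (· / c : ℝ → ℝ) := measurable_id.div_const c
  ext s hs
  rw [Measure.map_apply hdiv hs, gammaMeasure, gammaMeasure, withDensity_apply _ hs,
    withDensity_apply _ (hdiv hs), ← lintegral_indicator hs, ← lintegral_indicator (hdiv hs),
    ← lintegral_ofReal_mul_comp_mul_left hc (((· / c) ⁻¹' s).indicator (gammaPDF a r))]
  congr 1
  funext x
  by_cases hx : x ∈ s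
  · simp [hx, hc.ne', gammaPDF, gammaPDFReal_mul_rate hc hr, ENNReal.ofReal_mul hc.le]
  · simp [hx, hc.ne']

variable {Ω : Type*} [MeasurableSpace Ω] {μ : Measure Ω} {X Y : Ω → ℝ} {s : Set ℝ}

lemma lintegral_indicator_exp_comp_of_map_eq_gammaMeasure (hX : Measurable X)
    (hlaw : μ.map X = gammaMeasure a r) (hc : 0 < c) (hr : 0 ≤ r) (hs : MeasurableSet s) :
    ∫⁻ ω, s.indicator (fun x => ENNReal.ofReal (exp ((1 - c) * r * x))) (X ω) ∂μ
      = ENNReal.ofReal (c ^ (-a)) * μ {ω | X ω / c ∈ s} := by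
  have hdiv : Measurable (· / c : ℝ → ℝ) := measurable_id.div_const c
  rw [← lintegral_map (Measurable.indicator (by fun_prop) hs) hX, hlaw, lintegral_indicator hs,
    ← withDensity_apply _ hs, gammaMeasure_withDensity_exp hc hr, gammaMeasure_mul_rate hc hr,
    ← hlaw, Measure.map_map hdiv hX, Measure.smul_apply, Measure.map_apply (hdiv.comp hX) hs,
    smul_eq_mul]
  rfl

lemma measure_mem_and_lt_add_le_of_indepFun (hX : Measurable X) (hY : Measurable Y)
    (hXY : IndepFun X Y μ) (hs : MeasurableSet s) (t : ℝ) {u : ℝ} (hu : 0 ≤ u) :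
    μ {ω | X ω ∈ s ∧ t < X ω + Y ω}
      ≤ ENNReal.ofReal (exp (-(u * t)))
        * (∫⁻ ω, s.indicator (fun x => ENNReal.ofReal (exp (u * x))) (X ω) ∂μ)
        * ∫⁻ ω, ENNReal.ofReal (exp (u * Y ω)) ∂μ := by
  set F : ℝ → ENNReal := s.indicator (fun x => ENNReal.ofReal (exp (u * x)))
  set H : ℝ → ENNReal := fun y => ENNReal.ofReal (exp (u * y))
  have hF : Measurable F := Measurable.indicator (by fun_prop) hs
  have hH : Measurable H := by fun_prop
  set A := {ω | X ω ∈ s ∧ t < X ω + Y ω}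
  have hA : MeasurableSet A := (hX hs).inter (measurableSet_lt measurable_const (hX.add hY))
  have hmarkov :
      ∀ ω, A.indicator 1 ω ≤ ENNReal.ofReal (exp (-(u * t))) * (F (X ω) * H (Y ω)) := by
    intro ω
    by_cases hω : ω ∈ A
    · have hFX : F (X ω) = ENNReal.ofReal (exp (u * X ω)) := indicator_of_mem hω.1 _
      rw [indicator_of_mem hω, Pi.one_apply, hFX, ← ENNReal.ofReal_mul' (exp_nonneg _),
        ← ENNReal.ofReal_mul (exp_nonneg _), ← exp_add, ← exp_add, ENNReal.one_le_ofReal]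
      exact one_le_exp (by nlinarith [hω.2])
    · rw [indicator_of_notMem hω]
      exact zero_le
  calc μ A
      ≤ ∫⁻ ω, ENNReal.ofReal (exp (-(u * t))) * (F (X ω) * H (Y ω)) ∂μ := by
        rw [← lintegral_indicator_one hA]
        exact lintegral_mono hmarkov
    _ = _ := by
        rw [lintegral_const_mul' _ _ ENNReal.ofReal_ne_top,
          lintegral_mul_eq_lintegral_mul_lintegral_of_indepFun'' (f := fun ω => F (X ω))
            (g := fun ω => H (Y ω)) (hF.comp hX).aemeasurable
            (hH.comp hY).aemeasurable (hXY.comp hF hH), mul_assoc]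

end ProbabilityTheory

theorem chiSquare_mixed_tail_chernoff_general
    {Ω : Type*} [MeasurableSpace Ω] (μ : Measure Ω) [IsProbabilityMeasure μ]
    (I₁ I₂ : ℕ)
    (X Y : Ω → ℝ) (hX : Measurable X) (hY : Measurable Y)
    (hXY : IndepFun X Y μ)
    (hXlaw : μ.map X = chiSquareMeasure I₁) (hYlaw : μ.map Y = chiSquareMeasure I₂)
    (r₁sq r₂sq : ℝ)
    (u : ℝ) (hu0 : 0 ≤ u) (hu : u < 1 / 2) :
    (μ {ω | X ω ≤ r₁sq ∧ r₂sq < X ω + Y ω}).toReal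
      ≤ Real.exp (-(u * r₂sq)) * (1 - 2 * u) ^ (-((I₁ + I₂ : ℝ)) / 2) *
        (μ {ω | X ω ≤ (1 - 2 * u) * r₁sq}).toReal := by
  have hc : 0 < 1 - 2 * u := by linarith
  have hrate : (1 - (1 - 2 * u)) * (1 / 2) = u := by ring
  have hXmgf := lintegral_indicator_exp_comp_of_map_eq_gammaMeasure hX hXlaw hc
    (by norm_num) (measurableSet_Iic (a := r₁sq))
  have hYmgf := lintegral_indicator_exp_comp_of_map_eq_gammaMeasure hY hYlaw hc
    (by norm_num) MeasurableSet.univ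
  simp only [hrate, indicator_univ, mem_univ, ofPred_true, measure_univ, mul_one] at hXmgf hYmgf
  have hevent : {ω | X ω / (1 - 2 * u) ∈ Iic r₁sq} = {ω | X ω ≤ (1 - 2 * u) * r₁sq} := by
    ext ω
    rw [mem_ofPred_eq, mem_ofPred_eq, mem_Iic, div_le_iff₀ hc, mul_comm]
  have hpow : (1 - 2 * u) ^ (-((I₁ + I₂ : ℝ)) / 2)
      = (1 - 2 * u) ^ (-((I₁ : ℝ) / 2)) * (1 - 2 * u) ^ (-((I₂ : ℝ) / 2)) := by
    rw [← rpow_add hc]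
    congr 1
    ring
  have hbound :=
    measure_mem_and_lt_add_le_of_indepFun hX hY hXY (measurableSet_Iic (a := r₁sq)) r₂sq hu0
  rw [hXmgf, hYmgf, hevent] at hbound
  refine ENNReal.toReal_le_of_le_ofReal (by positivity) (hbound.trans_eq ?_)
  rw [hpow, ENNReal.ofReal_mul (by positivity), ENNReal.ofReal_mul (by positivity),
    ENNReal.ofReal_mul (by positivity), ENNReal.ofReal_toReal (measure_ne_top _ _)]
  ring

/-- Chernoff bound: for u ∈ [0,1/2),
P[χ²_{I₁} ≤ r₁² ∧ χ²_{I₁} + χ²_{I₂} > r₂²]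
  ≤ e^{-u r₂²} (1-2u)^{-(I₁+I₂)/2} P[χ²_{I₁} ≤ (1-2u) r₁²]. -/
theorem chiSquare_mixed_tail_chernoff
    {Ω : Type*} [MeasurableSpace Ω] (μ : Measure Ω) [IsProbabilityMeasure μ]
    (I₁ I₂ : ℕ) (hI₁ : 0 < I₁) (hI₂ : 0 < I₂)
    (X Y : Ω → ℝ) (hX : Measurable X) (hY : Measurable Y)
    (hXY : IndepFun X Y μ)
    (hXlaw : μ.map X = chiSquareMeasure I₁) (hYlaw : μ.map Y = chiSquareMeasure I₂)
    (r₁sq r₂sq : ℝ) (hr₁ : 0 < r₁sq) (hr₂ : 0 < r₂sq)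
    (u : ℝ) (hu0 : 0 ≤ u) (hu : u < 1 / 2) :
    (μ {ω | X ω ≤ r₁sq ∧ r₂sq < X ω + Y ω}).toReal
      ≤ Real.exp (-(u * r₂sq)) * (1 - 2 * u) ^ (-((I₁ + I₂ : ℝ)) / 2) *
        (μ {ω | X ω ≤ (1 - 2 * u) * r₁sq}).toReal :=
  chiSquare_mixed_tail_chernoff_general μ I₁ I₂ X Y hX hY hXY hXlaw hYlaw r₁sq r₂sq u hu0 hu
end

section
/- For a BSC with crossover probability p ∈ (0, 1/2), the probability that a maximum-likelihood / bounded-distance decoder errs with any code of M codewords and blocklength n is at least Σ_{t=r+1}^{n} C(n,t) p^t (1-p)^{n-t}, where r is the largest integer such that M·Σ_{t=0}^{r-1} C(n,t) ≤ 2^n — equivalently, for any partition of {0,1}^n into M decoding regions, some region has at most 2^n/M points, and the error probability given the corresponding codeword is minimized by a Hamming ball, yielding the stated binomial tail lower bound. -/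
/-!
Given the codeword `c`, the output `y` has probability `w (d(c, y))` with
`w t = p^t (1-p)^(n-t)`, which decreases in `t` since `p ≤ 1/2`. Trading points of a decoding
region `D` against points of the Hamming ball `B` of radius `r` around `c` shows
`P(D) ≤ P(B) + w(r+1) (|D| - |B|)`, a bound that is affine in `|D|`. Summing over the `M`
codewords, the disjoint regions have total size at most `2^n < M |B|`, so the average
probability of correct decoding is at most `P(B)`, i.e. the average error probability is at
least `P(noise weight > r)`.
-/

open Finset

theorem Finset.sum_le_sum_add_mul_card_sub_card {α : Type*} [DecidableEq α] {f : α → ℝ} {w : ℝ}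
    {B : Finset α} (hB : ∀ y ∈ B, w ≤ f y) (hBc : ∀ y ∉ B, f y ≤ w) (D : Finset α) :
    ∑ y ∈ D, f y ≤ ∑ y ∈ B, f y + w * (#D - #B) := by
  have hout : ∑ y ∈ D \ B, f y ≤ #(D \ B) • w :=
    sum_le_card_nsmul _ _ _ fun y hy => hBc y (mem_sdiff.1 hy).2
  have hin : #(B \ D) • w ≤ ∑ y ∈ B \ D, f y :=
    card_nsmul_le_sum _ _ _ fun y hy => hB y (mem_sdiff.1 hy).1
  have hcardD := card_sdiff_add_card_inter D B
  have hcardB := card_sdiff_add_card_inter B D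
  rw [inter_comm] at hcardB
  rw [← sum_inter_add_sum_sdiff D B, ← sum_inter_add_sum_sdiff B D, inter_comm B D,
    ← hcardD, ← hcardB]
  simp only [nsmul_eq_mul, Nat.cast_add] at hout hin ⊢
  linarith

def bscWeight (p : ℝ) (n t : ℕ) : ℝ := p ^ t * (1 - p) ^ (n - t)

theorem bscWeight_antitone {p : ℝ} (hp0 : 0 ≤ p) (hp : p ≤ 1 / 2) (n : ℕ) :
    Antitone (bscWeight p n) := by
  refine antitone_nat_of_succ_le fun t => ?_
  unfold bscWeight
  rcases lt_or_ge t n with ht | ht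
  · obtain ⟨k, rfl⟩ := Nat.exists_eq_add_of_lt ht
    rw [show t + k + 1 - (t + 1) = k by omega, show t + k + 1 - t = k + 1 by omega]
    have : 0 ≤ (1 - p) ^ k := pow_nonneg (by linarith) k
    calc p ^ (t + 1) * (1 - p) ^ k = p ^ t * (1 - p) ^ k * p := by ring
      _ ≤ p ^ t * (1 - p) ^ k * (1 - p) := by gcongr; linarith
      _ = p ^ t * (1 - p) ^ (k + 1) := by ring
  · -- past `n` the truncated exponent `n - t` is `0`, and only `p ≤ 1` is needed
    rw [Nat.sub_eq_zero_of_le ht, Nat.sub_eq_zero_of_le (by omega), pow_succ, pow_zero,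
      mul_one, mul_one]
    exact mul_le_of_le_one_right (pow_nonneg hp0 t) (by linarith)

section Hamming

variable {ι : Type*} [Fintype ι] [DecidableEq ι]

def hammingDiffEquiv (c : ι → Bool) : (ι → Bool) ≃ Finset ι where
  toFun y := {j | c j ≠ y j}
  invFun s j := if j ∈ s then !c j else c j
  left_inv y := by
    funext j
    cases hc : c j <;> cases hy : y j <;> simp [hc, hy]
  right_inv s := by
    ext j
    by_cases h : j ∈ s <;> simp [h]

theorem card_hammingDiffEquiv (c y : ι → Bool) : #(hammingDiffEquiv c y) = hammingDist c y := rfl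

theorem sum_hammingDist_eq_sum_choose {M : Type*} [AddCommMonoid M] (c : ι → Bool) (F : ℕ → M) :
    ∑ y, F (hammingDist c y) =
      ∑ t ∈ range (Fintype.card ι + 1), (Fintype.card ι).choose t • F t := by
  rw [← (hammingDiffEquiv c).symm.sum_comp]
  simp only [← card_hammingDiffEquiv c, Equiv.apply_symm_apply]
  rw [← powerset_univ, sum_powerset_apply_card, card_univ]

def hammingBall (c : ι → Bool) (r : ℕ) : Finset (ι → Bool) := {y | hammingDist c y ≤ r}

theorem card_hammingBall (c : ι → Bool) (r : ℕ) :
    #(hammingBall c r) = ∑ t ∈ range (r + 1), (Fintype.card ι).choose t := by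
  rw [hammingBall, card_filter, sum_hammingDist_eq_sum_choose c fun t => if t ≤ r then 1 else 0]
  simp only [smul_eq_mul, mul_ite, mul_one, mul_zero, ← sum_filter]
  refine sum_subset (fun t ht => ?_) fun t ht hnot => Nat.choose_eq_zero_of_lt ?_
  · simp only [mem_filter, mem_range] at ht ⊢
    omega
  · simp only [mem_filter, mem_range, not_and] at ht hnot
    omega

theorem sum_bscWeight_hammingDist (p : ℝ) (c : ι → Bool) :
    ∑ y, bscWeight p (Fintype.card ι) (hammingDist c y) = 1 := by
  have binomial := add_pow p (1 - p) (Fintype.card ι)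
  rw [add_sub_cancel, one_pow] at binomial
  rw [sum_hammingDist_eq_sum_choose, binomial]
  simp only [bscWeight, nsmul_eq_mul]
  exact sum_congr rfl fun t _ => by ring

theorem sum_compl_hammingBall_bscWeight (p : ℝ) (c : ι → Bool) (r : ℕ) :
    ∑ y ∈ (hammingBall c r)ᶜ, bscWeight p (Fintype.card ι) (hammingDist c y) =
      ∑ t ∈ Icc (r + 1) (Fintype.card ι),
        ((Fintype.card ι).choose t : ℝ) * p ^ t * (1 - p) ^ (Fintype.card ι - t) := by
  rw [hammingBall, compl_filter, sum_filter,
    sum_hammingDist_eq_sum_choose c fun t => if ¬t ≤ r then bscWeight p _ t else 0]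
  simp only [smul_ite, smul_zero, ← sum_filter, nsmul_eq_mul, bscWeight, mul_assoc]
  congr 1
  ext t
  simp only [mem_filter, mem_range, mem_Icc]
  omega

theorem tail_add_mul_le_sum_compl_bscWeight {p : ℝ} (hp0 : 0 ≤ p) (hp : p ≤ 1 / 2)
    (c : ι → Bool) (r : ℕ) (D : Finset (ι → Bool)) :
    ∑ t ∈ Icc (r + 1) (Fintype.card ι),
        ((Fintype.card ι).choose t : ℝ) * p ^ t * (1 - p) ^ (Fintype.card ι - t) +
      bscWeight p (Fintype.card ι) (r + 1) * (#(hammingBall c r) - #D) ≤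
    ∑ y ∈ Dᶜ, bscWeight p (Fintype.card ι) (hammingDist c y) := by
  set f := fun y => bscWeight p (Fintype.card ι) (hammingDist c y)
  have hball := sum_le_sum_add_mul_card_sub_card (f := f) (w := bscWeight p _ (r + 1))
    (B := hammingBall c r)
    (fun y hy => bscWeight_antitone hp0 hp _ (by simp [hammingBall] at hy; omega))
    (fun y hy => bscWeight_antitone hp0 hp _ (by simp [hammingBall] at hy; omega)) D
  rw [← sum_compl_hammingBall_bscWeight p c r]
  have hD := sum_add_sum_compl D f
  have hB := sum_add_sum_compl (hammingBall c r) f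
  rw [sum_bscWeight_hammingDist] at hD hB
  linarith

end Hamming

theorem bsc_sphere_packing_lower_bound_general
    (n M r : ℕ) (p : ℝ) (hp : 0 < p) (hp2 : p < 1 / 2)
    (c : Fin M → (Fin n → Bool)) (D : Fin M → Finset (Fin n → Bool))
    (hpart : ∀ y : Fin n → Bool, ∃! i, y ∈ D i)
    (hr' : 2 ^ n < M * ∑ t ∈ Finset.range (r + 1), n.choose t) :
    ∑ t ∈ Finset.Icc (r + 1) n, (n.choose t : ℝ) * p ^ t * (1 - p) ^ (n - t)
      ≤ (1 / M : ℝ) * ∑ i : Fin M, ∑ y ∈ (D i)ᶜ,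
          p ^ hammingDist (c i) y * (1 - p) ^ (n - hammingDist (c i) y) := by
  set tail := ∑ t ∈ Icc (r + 1) n, (n.choose t : ℝ) * p ^ t * (1 - p) ^ (n - t)
  set V := ∑ t ∈ range (r + 1), n.choose t
  have hM : (0 : ℝ) < M := by
    have : M ≠ 0 := by rintro rfl; simp at hr'
    positivity
  have hpacking : ∑ i, (#(D i) : ℝ) ≤ 2 ^ n := by
    have hdisj : ((univ : Finset (Fin M)) : Set (Fin M)).PairwiseDisjoint D := fun i _ j _ hij =>
      disjoint_left.2 fun y hi hj => hij ((hpart y).unique hi hj)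
    exact_mod_cast ((card_biUnion hdisj).symm.trans_le (card_le_univ _)).trans_eq (by simp)
  have hcodeword i := tail_add_mul_le_sum_compl_bscWeight hp.le hp2.le (c i) r (D i)
  simp only [Fintype.card_fin, card_hammingBall] at hcodeword
  have hw : 0 ≤ bscWeight p n (r + 1) := by
    have : 0 ≤ 1 - p := by linarith
    unfold bscWeight
    positivity
  have hV : (2 : ℝ) ^ n ≤ M * V := by exact_mod_cast hr'.le
  rw [one_div, inv_mul_eq_div, le_div_iff₀ hM]
  calc tail * M ≤ tail * M + bscWeight p n (r + 1) * (M * V - ∑ i, (#(D i) : ℝ)) :=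
        le_add_of_nonneg_right (mul_nonneg hw (by linarith))
    _ = ∑ i, (tail + bscWeight p n (r + 1) * (V - #(D i))) := by
        simp only [sum_add_distrib, ← mul_sum, sum_sub_distrib, sum_const, card_univ,
          Fintype.card_fin, nsmul_eq_mul]
        ring
    _ ≤ _ := sum_le_sum fun i _ => hcodeword i

/-- Sphere-packing lower bound for the BSC: for crossover probability
p ∈ (0, 1/2), any code with M codewords of blocklength n and decoding regions
partitioning {0,1}ⁿ has average error probability at least the binomial tail
Σ_{t=r+1}^n C(n,t) p^t (1-p)^{n-t}, where r is the largest integer with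
M·Σ_{t=0}^{r-1} C(n,t) ≤ 2ⁿ. -/
theorem bsc_sphere_packing_lower_bound
    (n M r : ℕ) (hM : 0 < M) (p : ℝ) (hp : 0 < p) (hp2 : p < 1 / 2)
    (c : Fin M → (Fin n → Bool)) (D : Fin M → Finset (Fin n → Bool))
    (hpart : ∀ y : Fin n → Bool, ∃! i, y ∈ D i)
    (hr : M * ∑ t ∈ Finset.range r, n.choose t ≤ 2 ^ n)
    (hr' : 2 ^ n < M * ∑ t ∈ Finset.range (r + 1), n.choose t) :
    ∑ t ∈ Finset.Icc (r + 1) n, (n.choose t : ℝ) * p ^ t * (1 - p) ^ (n - t)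
      ≤ (1 / M : ℝ) * ∑ i : Fin M, ∑ y ∈ (D i)ᶜ,
          p ^ hammingDist (c i) y * (1 - p) ^ (n - hammingDist (c i) y) :=
  bsc_sphere_packing_lower_bound_general n M r p hp hp2 c D hpart hr'
end
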